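/- (Proposition 1, converse direction.) Let n ≥ 1, let A be an n×n real sub-generator matrix, α ∈ ℝⁿ a probability vector, and μ, γ_V, γ_R, ρ_J, μ_J > 0. Let τ = αᵀ(μI−A)⁻¹((−A)𝟙), n_G = (1 − τ·(γ_R/(μ+γ_R))·(γ_V/(μ+γ_V)))⁻¹ and ϱ = (τ·(1/(μ+γ_V))·(ρ_J/(ρ_J+μ_J))·n_G)⁻¹, and assume τ > 0. If (J, B, V, R, φ) with J, V, R, φ ∈ ℝ and B ∈ ℝⁿ satisfies the equilibrium equations (E1)–(E4), then φ = ϱ·V; moreover, if (J, B, V, R) ≠ (0, 0, 0, 0) then V ≠ 0. -/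

import Mathlib

open Matrix

/-- The survival-and-exit probability `τ = αᵀ (μI − A)⁻¹ ((−A)𝟙)`. -/
noncomputable def tau {n : ℕ} (A : Matrix (Fin n) (Fin n) ℝ) (α : Fin n → ℝ) (μ : ℝ) : ℝ :=
  α ⬝ᵥ ((μ • (1 : Matrix (Fin n) (Fin n) ℝ) - A)⁻¹ *ᵥ ((-A) *ᵥ (1 : Fin n → ℝ)))

/-- The average number of gonotrophic cycles `n_G`. -/
noncomputable def nG {n : ℕ} (A : Matrix (Fin n) (Fin n) ℝ) (α : Fin n → ℝ)
    (μ γV γR : ℝ) : ℝ :=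
  (1 - tau A α μ * (γR / (μ + γR)) * (γV / (μ + γV)))⁻¹

/-- The threshold quantity `ϱ`. -/
noncomputable def varrho {n : ℕ} (A : Matrix (Fin n) (Fin n) ℝ) (α : Fin n → ℝ)
    (μ γV γR ρJ μJ : ℝ) : ℝ :=
  (tau A α μ * (1 / (μ + γV)) * (ρJ / (ρJ + μJ)) * nG A α μ γV γR)⁻¹

/-- The four equilibrium equations (E1)–(E4) of the mosquito demographic model. -/
def IsEquilibrium {n : ℕ} (A : Matrix (Fin n) (Fin n) ℝ) (α : Fin n → ℝ)
    (μ γV γR ρJ μJ : ℝ) (J : ℝ) (B : Fin n → ℝ) (V R φ : ℝ) : Prop :=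
  φ - (ρJ + μJ) * J = 0 ∧
  (ρJ * J + γR * R) • α + Aᵀ *ᵥ B - μ • B = 0 ∧
  ((-A) *ᵥ (1 : Fin n → ℝ)) ⬝ᵥ B - (γV + μ) * V = 0 ∧
  γV * V - (γR + μ) * R = 0


/-!
Write `M = μI − A`. Equation (E2) says `Mᵀ B = c α` with `c = ρ_J J + γ_R R`, so pairing `B`
with `(−A)𝟙 = M (M⁻¹ (−A)𝟙)` gives `((−A)𝟙) ⬝ B = c τ`; `M` is invertible because it is strictly
diagonally dominant. With (E3) and (E4) this becomes the scalar balance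
`τ ρ_J J = (μ + γ_V) n_G⁻¹ V`, from which `φ = ϱ V` follows by (E1). If `V = 0`, the balance
and (E4) force `J = R = 0`, hence `Mᵀ B = 0` and `B = 0`.
-/

section SubGenerator

variable {ι : Type*} [Fintype ι] [DecidableEq ι]

def IsSubGenerator (A : Matrix ι ι ℝ) : Prop :=
  (∀ i j, i ≠ j → 0 ≤ A i j) ∧ ∀ i, ∑ j, A i j ≤ 0

theorem IsSubGenerator.det_smul_one_sub_ne_zero {A : Matrix ι ι ℝ} (hA : IsSubGenerator A)
    {μ : ℝ} (hμ : 0 < μ) : (μ • (1 : Matrix ι ι ℝ) - A).det ≠ 0 := by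
  refine det_ne_zero_of_sum_row_lt_diag fun k => ?_
  have hoff_sum : ∑ j ∈ Finset.univ.erase k, ‖(μ • (1 : Matrix ι ι ℝ) - A) k j‖
      = ∑ j ∈ Finset.univ.erase k, A k j := by
    refine Finset.sum_congr rfl fun j hj => ?_
    have hjk := Finset.ne_of_mem_erase hj
    rw [Matrix.sub_apply, Matrix.smul_apply, one_apply_ne' hjk, smul_zero, zero_sub, norm_neg,
      Real.norm_of_nonneg (hA.1 k j hjk.symm)]
  have hdiag : μ - A k k ≤ ‖(μ • (1 : Matrix ι ι ℝ) - A) k k‖ := by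
    simpa using le_abs_self (μ - A k k)
  rw [hoff_sum, Finset.sum_erase_eq_sub (Finset.mem_univ k)]
  linarith [hA.2 k]

end SubGenerator

theorem Matrix.dotProduct_eq_inv_mulVec_dotProduct_transpose_mulVec {ι R : Type*} [Fintype ι]
    [DecidableEq ι] [CommRing R] {M : Matrix ι ι R} (hM : IsUnit M.det) (u v : ι → R) :
    u ⬝ᵥ v = (M⁻¹ *ᵥ u) ⬝ᵥ (Mᵀ *ᵥ v) := by
  rw [mulVec_transpose, dotProduct_comm _ (v ᵥ* M), ← dotProduct_mulVec, mulVec_mulVec,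
    mul_nonsing_inv M hM, one_mulVec, dotProduct_comm]

-- Holds without side conditions since `(x * y)⁻¹ = x⁻¹ * y⁻¹` in ℝ also when `x` or `y` is `0`.
theorem varrho_eq {n : ℕ} (A : Matrix (Fin n) (Fin n) ℝ) (α : Fin n → ℝ)
    (μ γV γR ρJ μJ : ℝ) :
    varrho A α μ γV γR ρJ μJ =
      (μ + γV) * (ρJ + μJ) * (nG A α μ γV γR)⁻¹ / (tau A α μ * ρJ) := by
  simp only [varrho, div_eq_mul_inv, mul_inv, inv_inv]
  ring

namespace IsEquilibrium

variable {n : ℕ} {A : Matrix (Fin n) (Fin n) ℝ} {α : Fin n → ℝ} {μ γV γR ρJ μJ J V R φ : ℝ}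
  {B : Fin n → ℝ}

theorem transpose_mulVec (h : IsEquilibrium A α μ γV γR ρJ μJ J B V R φ) :
    (μ • (1 : Matrix (Fin n) (Fin n) ℝ) - A)ᵀ *ᵥ B = (ρJ * J + γR * R) • α := by
  rw [transpose_sub, transpose_smul, transpose_one, sub_mulVec, smul_mulVec, one_mulVec]
  linear_combination -h.2.1

theorem tau_balance (h : IsEquilibrium A α μ γV γR ρJ μJ J B V R φ)
    (hdet : (μ • (1 : Matrix (Fin n) (Fin n) ℝ) - A).det ≠ 0) :
    (ρJ * J + γR * R) * tau A α μ = (γV + μ) * V := by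
  have hpair := dotProduct_eq_inv_mulVec_dotProduct_transpose_mulVec hdet.isUnit
    ((-A) *ᵥ (1 : Fin n → ℝ)) B
  rw [h.transpose_mulVec, dotProduct_smul, smul_eq_mul] at hpair
  rw [tau, dotProduct_comm α, ← hpair]
  linarith [h.2.2.1]

theorem tau_mul_eq (h : IsEquilibrium A α μ γV γR ρJ μJ J B V R φ)
    (hdet : (μ • (1 : Matrix (Fin n) (Fin n) ℝ) - A).det ≠ 0)
    (hγR : μ + γR ≠ 0) (hγV : μ + γV ≠ 0) :
    tau A α μ * ρJ * J = (μ + γV) * (nG A α μ γV γR)⁻¹ * V := by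
  have hR : R = γV * V / (μ + γR) := by
    rw [eq_div_iff hγR]
    linarith [h.2.2.2]
  have hbal := h.tau_balance hdet
  rw [hR] at hbal
  rw [nG, inv_inv]
  field_simp at hbal ⊢
  linear_combination hbal

end IsEquilibrium

theorem equilibrium_necessary_condition
    (n : ℕ) (A : Matrix (Fin n) (Fin n) ℝ)
    (hoff : ∀ i j, i ≠ j → 0 ≤ A i j)
    (hrow : ∀ i, ∑ j, A i j ≤ 0)
    (α : Fin n → ℝ)
    (μ γV γR ρJ μJ : ℝ)
    (hμ : 0 < μ) (hγV : 0 < γV) (hγR : 0 < γR) (hρJ : 0 < ρJ)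
    (hτ : 0 < tau A α μ)
    (J : ℝ) (B : Fin n → ℝ) (V R φ : ℝ)
    (heq : IsEquilibrium A α μ γV γR ρJ μJ J B V R φ) :
    φ = varrho A α μ γV γR ρJ μJ * V ∧
      (¬(J = 0 ∧ B = 0 ∧ V = 0 ∧ R = 0) → V ≠ 0) := by
  have hdet := IsSubGenerator.det_smul_one_sub_ne_zero ⟨hoff, hrow⟩ hμ
  have hbal := heq.tau_mul_eq hdet (by positivity) (by positivity)
  refine ⟨?_, fun hne hV => hne ?_⟩
  · rw [varrho_eq, show φ = (ρJ + μJ) * J by linarith [heq.1]]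
    field_simp
    linear_combination (ρJ + μJ) * hbal
  · have hR : R = 0 := by
      simpa [hV, (by positivity : γR + μ ≠ 0)] using heq.2.2.2
    have hJ : J = 0 := by
      rw [hV, mul_zero] at hbal
      simpa [hτ.ne', hρJ.ne'] using hbal
    have hB : B = 0 := by
      refine eq_zero_of_mulVec_eq_zero (by rwa [det_transpose]) ?_
      rw [heq.transpose_mulVec, hJ, hR]
      simp
    exact ⟨hJ, hB, hV, hR⟩
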